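/- For a general A_n quiver with arbitrary orientation, and morphisms Θ: M1 → M2 and Ψ: M2 → M3 between direct sums of interval representations, the diagonal block of the composition equals the composition of the diagonal blocks: for every interval I[a,b], π^3_{a,b}∘(ΨΘ)∘ι^1_{a,b} = (π^3_{a,b}∘Ψ∘ι^2_{a,b})∘(π^2_{a,b}∘Θ∘ι^1_{a,b}). -/

import Mathlib

/-!
Expanding `Θ.θ v` along the intervals `q` containing `v`, the `p`-block of `Ψ ∘ Θ` (for
`p = (a, b)`) is the sum of the composites `Ψ_{q→p} ∘ Θ_{p→q}`, so it suffices that these vanish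
for `q ≠ p`. The commutativity squares show that a block `Θ_{p→q}` does not change along an arrow
inside the common support of `p` and `q`, so the composite may be computed at an end `j` of
`p ∩ q` where exactly one of `p`, `q` continues to the neighbouring vertex `j'`. There the square
of the arrow between `j` and `j'` kills `Θ_{p→q}` or `Ψ_{q→p}`, according to its orientation:
nonzero morphisms `I_p → I_q` and `I_q → I_p` never both exist unless `p = q`.
-/

/-- The ambient space of the direct sum `⊕_{(a,b)} I[a,b]^{m (a,b)}` of interval
representations: one copy of `K^{m p}` for each pair `p = (a,b)`. -/
abbrev IntSum (K : Type) [Field K] (m : ℕ × ℕ → ℕ) := ∀ p : ℕ × ℕ, Fin (m p) → K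

/-- Projection of the ambient space onto the part supported at vertex `v`: it keeps the
component of `I[a,b]` exactly when `[a,b]` is a valid interval of the `A_n` quiver
(`1 ≤ a ≤ b ≤ n`) containing `v`.  The vertex-`v` space of the direct-sum representation
is the image of `trunc`, and for an arrow between vertices `i` and `i+1` the structure
map of the representation is (the restriction of) `trunc (i+1) ∘ trunc i`, keeping exactly
the intervals containing both endpoints. -/
def trunc (K : Type) [Field K] (n : ℕ) (m : ℕ × ℕ → ℕ) (v : ℕ) :
    IntSum K m →ₗ[K] IntSum K m :=
  LinearMap.pi fun p =>
    if 1 ≤ p.1 ∧ p.1 ≤ v ∧ v ≤ p.2 ∧ p.2 ≤ n then LinearMap.proj p else 0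

/-- A morphism of representations of the `A_n` quiver with orientation `τ`
(`τ i = true` meaning the `i`-th arrow points forward `i → i+1`) between the direct sums
of interval representations with multiplicities `m` and `m'`: a family of linear maps
`θ v` (one for each vertex), supported on the vertex spaces, commuting with the structure
maps of the two representations. -/
structure RepMor (K : Type) [Field K] (n : ℕ) (τ : ℕ → Bool) (m m' : ℕ × ℕ → ℕ) where
  θ : ℕ → IntSum K m →ₗ[K] IntSum K m'
  supp : ∀ v, trunc K n m' v ∘ₗ θ v ∘ₗ trunc K n m v = θ v
  commF : ∀ i, 1 ≤ i → i < n → τ i = true →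
    θ (i + 1) ∘ₗ trunc K n m (i + 1) ∘ₗ trunc K n m i =
      trunc K n m' (i + 1) ∘ₗ θ i ∘ₗ trunc K n m i
  commB : ∀ i, 1 ≤ i → i < n → τ i = false →
    θ i ∘ₗ trunc K n m i ∘ₗ trunc K n m (i + 1) =
      trunc K n m' i ∘ₗ θ (i + 1) ∘ₗ trunc K n m (i + 1)

/-- The diagonal block of a morphism at the interval `I[p.1, p.2]` and vertex `v`:
the composition (projection onto the `I[a,b]`-isotypic summand) ∘ (the morphism) ∘
(inclusion of the `I[a,b]`-isotypic summand). -/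
def blk {K : Type} [Field K] {n : ℕ} {τ : ℕ → Bool} {m m' : ℕ × ℕ → ℕ}
    (Θ : RepMor K n τ m m') (p : ℕ × ℕ) (v : ℕ) :
    (Fin (m p) → K) →ₗ[K] (Fin (m' p) → K) :=
  LinearMap.proj p ∘ₗ Θ.θ v ∘ₗ LinearMap.single K (fun p => Fin (m p) → K) p

abbrev IntervalContains (n : ℕ) (p : ℕ × ℕ) (v : ℕ) : Prop :=
  1 ≤ p.1 ∧ p.1 ≤ v ∧ v ≤ p.2 ∧ p.2 ≤ n

def intervalsContaining (n v : ℕ) : Finset (ℕ × ℕ) := Finset.Icc 1 v ×ˢ Finset.Icc v n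

lemma mem_intervalsContaining {n v : ℕ} {q : ℕ × ℕ} :
    q ∈ intervalsContaining n v ↔ IntervalContains n q v := by
  simp only [intervalsContaining, Finset.mem_product, Finset.mem_Icc]
  omega

def IsArrow (n : ℕ) (τ : ℕ → Bool) (s t : ℕ) : Prop :=
  ∃ i, 1 ≤ i ∧ i < n ∧ (τ i = true ∧ s = i ∧ t = i + 1 ∨ τ i = false ∧ s = i + 1 ∧ t = i)

lemma isArrow_or_isArrow {n i : ℕ} (τ : ℕ → Bool) (h1 : 1 ≤ i) (h2 : i < n) :
    IsArrow n τ i (i + 1) ∨ IsArrow n τ (i + 1) i := by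
  cases hτ : τ i
  · exact .inr ⟨i, h1, h2, .inr ⟨hτ, rfl, rfl⟩⟩
  · exact .inl ⟨i, h1, h2, .inl ⟨hτ, rfl, rfl⟩⟩

lemma exists_isArrow_boundary {n : ℕ} (τ : ℕ → Bool) {p q : ℕ × ℕ} {v : ℕ} (hne : p ≠ q)
    (hp : IntervalContains n p v) (hq : IntervalContains n q v) :
    ∃ j j', (IsArrow n τ j j' ∨ IsArrow n τ j' j) ∧ IntervalContains n p j ∧
      IntervalContains n q j ∧ ¬(IntervalContains n p j' ↔ IntervalContains n q j') := by
  by_cases h₁ : p.1 = q.1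
  · have h₂ : p.2 ≠ q.2 := fun h₂ => hne (Prod.ext h₁ h₂)
    have hj : 1 ≤ min p.2 q.2 ∧ min p.2 q.2 < n := by omega
    exact ⟨_, _, isArrow_or_isArrow τ hj.1 hj.2, by omega, by omega, by omega⟩
  · obtain ⟨i, hi⟩ : ∃ i, max p.1 q.1 = i + 1 := ⟨max p.1 q.1 - 1, by omega⟩
    have hj : 1 ≤ i ∧ i < n := by omega
    exact ⟨i + 1, i, (isArrow_or_isArrow τ hj.1 hj.2).symm, by omega, by omega, by omega⟩

section Trunc

variable {K : Type} [Field K] {n : ℕ} {m : ℕ × ℕ → ℕ}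

lemma trunc_apply (v : ℕ) (x : IntSum K m) (q : ℕ × ℕ) :
    trunc K n m v x q = if IntervalContains n q v then x q else 0 := by
  simp only [trunc, LinearMap.pi_apply]
  split_ifs <;> rfl

lemma trunc_single (v : ℕ) (p : ℕ × ℕ) (x : Fin (m p) → K) :
    trunc K n m v (Pi.single p x) = if IntervalContains n p v then Pi.single p x else 0 := by
  funext q
  rw [trunc_apply]
  by_cases hq : q = p
  · subst hq; split_ifs <;> simp
  · split_ifs <;> simp [Pi.single_eq_of_ne hq]

lemma trunc_comp_trunc (v : ℕ) : trunc K n m v ∘ₗ trunc K n m v = trunc K n m v := by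
  ext x q : 2
  simp only [LinearMap.comp_apply, trunc_apply]
  split_ifs <;> rfl

lemma trunc_eq_sum_single (v : ℕ) (x : IntSum K m) :
    trunc K n m v x = ∑ q ∈ intervalsContaining n v, Pi.single q (x q) := by
  funext r
  simp only [trunc_apply, Finset.sum_apply, Finset.sum_pi_single, mem_intervalsContaining]

end Trunc

namespace RepMor

variable {K : Type} [Field K] {n : ℕ} {τ : ℕ → Bool} {m m' m'' : ℕ × ℕ → ℕ}

lemma trunc_comp_θ (Θ : RepMor K n τ m m') (v : ℕ) : trunc K n m' v ∘ₗ Θ.θ v = Θ.θ v := by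
  conv_lhs => rw [← Θ.supp v]
  rw [← LinearMap.comp_assoc, trunc_comp_trunc, Θ.supp]

lemma comm_of_isArrow (Θ : RepMor K n τ m m') {s t : ℕ} (h : IsArrow n τ s t) :
    Θ.θ t ∘ₗ trunc K n m t ∘ₗ trunc K n m s = trunc K n m' t ∘ₗ Θ.θ s ∘ₗ trunc K n m s := by
  obtain ⟨i, h1, h2, ⟨hτ, rfl, rfl⟩ | ⟨hτ, rfl, rfl⟩⟩ := h
  exacts [Θ.commF _ h1 h2 hτ, Θ.commB _ h1 h2 hτ]

def block (Θ : RepMor K n τ m m') (p q : ℕ × ℕ) (w : ℕ) :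
    (Fin (m p) → K) →ₗ[K] (Fin (m' q) → K) :=
  LinearMap.proj q ∘ₗ Θ.θ w ∘ₗ LinearMap.single K (fun p => Fin (m p) → K) p

lemma block_apply (Θ : RepMor K n τ m m') (p q : ℕ × ℕ) (w : ℕ) (x : Fin (m p) → K) :
    Θ.block p q w x = Θ.θ w (Pi.single p x) q := rfl

lemma block_eq_zero_of_not_contains_right (Θ : RepMor K n τ m m') (p : ℕ × ℕ) {q : ℕ × ℕ}
    {w : ℕ} (hq : ¬IntervalContains n q w) : Θ.block p q w = 0 := by
  refine LinearMap.ext fun x => ?_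
  rw [block_apply, ← Θ.trunc_comp_θ, LinearMap.comp_apply, trunc_apply, if_neg hq]
  rfl

lemma block_eq_ite_of_isArrow (Θ : RepMor K n τ m m') {p q : ℕ × ℕ} {s t : ℕ}
    (h : IsArrow n τ s t) (hp : IntervalContains n p s) (hq : IntervalContains n q t) :
    Θ.block p q s = if IntervalContains n p t then Θ.block p q t else 0 := by
  refine LinearMap.ext fun x => ?_
  have hx := congr_fun (LinearMap.congr_fun (Θ.comm_of_isArrow h) (Pi.single p x)) q
  simp only [LinearMap.comp_apply, trunc_single, if_pos hp, trunc_apply, if_pos hq] at hx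
  rw [block_apply, ← hx]
  split_ifs <;> simp [block_apply]

lemma block_eq_of_isArrow (Θ : RepMor K n τ m m') {p q : ℕ × ℕ} {s t : ℕ}
    (h : IsArrow n τ s t) (hps : IntervalContains n p s) (hpt : IntervalContains n p t)
    (hq : IntervalContains n q t) : Θ.block p q s = Θ.block p q t := by
  rw [Θ.block_eq_ite_of_isArrow h hps hq, if_pos hpt]

lemma block_src_eq_zero_of_isArrow (Θ : RepMor K n τ m m') {p q : ℕ × ℕ} {s t : ℕ}
    (h : IsArrow n τ s t) (hps : IntervalContains n p s) (hpt : ¬IntervalContains n p t)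
    (hq : IntervalContains n q t) : Θ.block p q s = 0 := by
  rw [Θ.block_eq_ite_of_isArrow h hps hq, if_neg hpt]

lemma block_tgt_eq_zero_of_isArrow (Θ : RepMor K n τ m m') {p q : ℕ × ℕ} {s t : ℕ}
    (h : IsArrow n τ s t) (hps : IntervalContains n p s) (hpt : IntervalContains n p t)
    (hqs : ¬IntervalContains n q s) (hqt : IntervalContains n q t) : Θ.block p q t = 0 := by
  rw [← Θ.block_eq_of_isArrow h hps hpt hqt, Θ.block_eq_zero_of_not_contains_right p hqs]

lemma block_eq_of_contains (Θ : RepMor K n τ m m') {p q : ℕ × ℕ} {w u : ℕ}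
    (hpw : IntervalContains n p w) (hqw : IntervalContains n q w)
    (hpu : IntervalContains n p u) (hqu : IntervalContains n q u) :
    Θ.block p q w = Θ.block p q u := by
  wlog hwu : w ≤ u generalizing w u
  · exact (this hpu hqu hpw hqw (by omega)).symm
  induction u, hwu using Nat.le_induction with
  | base => rfl
  | succ u hwu ih =>
    have hpu' : IntervalContains n p u := by omega
    rw [ih (by omega) (by omega)]
    rcases isArrow_or_isArrow τ (by omega : 1 ≤ u) (by omega : u < n) with h | h
    · exact Θ.block_eq_of_isArrow h hpu' hpu hqu
    · exact (Θ.block_eq_of_isArrow h hpu hpu' (by omega)).symm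

/-- Which of the two blocks vanishes depends only on the orientation of the arrow, not on the
morphism. -/
lemma block_comp_block_eq_zero_of_boundary (Θ : RepMor K n τ m m') (Ψ : RepMor K n τ m' m'')
    {p q : ℕ × ℕ} {j j' : ℕ} (hadj : IsArrow n τ j j' ∨ IsArrow n τ j' j)
    (hp : IntervalContains n p j) (hq : IntervalContains n q j)
    (hpq : ¬(IntervalContains n p j' ↔ IntervalContains n q j')) :
    Ψ.block q p j ∘ₗ Θ.block p q j = 0 := by
  rcases hadj with h | h <;> by_cases hp' : IntervalContains n p j'
  · rw [Ψ.block_src_eq_zero_of_isArrow h hq (by tauto) hp', LinearMap.zero_comp]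
  · rw [Θ.block_src_eq_zero_of_isArrow h hp hp' (by tauto), LinearMap.comp_zero]
  · rw [Θ.block_tgt_eq_zero_of_isArrow h hp' hp (by tauto) hq, LinearMap.comp_zero]
  · rw [Ψ.block_tgt_eq_zero_of_isArrow h (by tauto) hq hp' hp, LinearMap.zero_comp]

lemma block_comp_block_eq_zero (Θ : RepMor K n τ m m') (Ψ : RepMor K n τ m' m'')
    {p q : ℕ × ℕ} {v : ℕ} (hne : p ≠ q)
    (hp : IntervalContains n p v) (hq : IntervalContains n q v) :
    Ψ.block q p v ∘ₗ Θ.block p q v = 0 := by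
  obtain ⟨j, j', hadj, hpj, hqj, hpq⟩ := exists_isArrow_boundary τ hne hp hq
  rw [Θ.block_eq_of_contains hp hq hpj hqj, Ψ.block_eq_of_contains hq hp hqj hpj]
  exact block_comp_block_eq_zero_of_boundary Θ Ψ hadj hpj hqj hpq

lemma proj_comp_comp_single_eq_sum (Θ : RepMor K n τ m m') (Ψ : RepMor K n τ m' m'')
    (p r : ℕ × ℕ) (v : ℕ) :
    LinearMap.proj r ∘ₗ (Ψ.θ v ∘ₗ Θ.θ v) ∘ₗ LinearMap.single K (fun p => Fin (m p) → K) p =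
      ∑ q ∈ intervalsContaining n v, Ψ.block q r v ∘ₗ Θ.block p q v := by
  refine LinearMap.ext fun x => ?_
  rw [← Θ.trunc_comp_θ]
  simp only [LinearMap.comp_apply, trunc_eq_sum_single, map_sum, LinearMap.sum_apply]
  rfl

end RepMor

theorem blk_comp_general (K : Type) [Field K] (n : ℕ) (τ : ℕ → Bool)
    (m₁ m₂ m₃ : ℕ × ℕ → ℕ) (Θ : RepMor K n τ m₁ m₂) (Ψ : RepMor K n τ m₂ m₃)
    (a b v : ℕ) (ha : 1 ≤ a) (hb : b ≤ n) (hav : a ≤ v) (hvb : v ≤ b) :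
    LinearMap.proj (a, b) ∘ₗ (Ψ.θ v ∘ₗ Θ.θ v) ∘ₗ
        LinearMap.single K (fun p => Fin (m₁ p) → K) (a, b) =
      blk Ψ (a, b) v ∘ₗ blk Θ (a, b) v := by
  have hp : IntervalContains n (a, b) v := ⟨ha, hav, hvb, hb⟩
  rw [RepMor.proj_comp_comp_single_eq_sum,
    Finset.sum_eq_single_of_mem (a, b) (mem_intervalsContaining.2 hp)]
  · rfl
  · intro q hq hne
    exact RepMor.block_comp_block_eq_zero Θ Ψ (Ne.symm hne) hp (mem_intervalsContaining.1 hq)
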